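/- Let k be a field and R = k[x,y,z] with 𝔪 = (x,y,z). There exists a nonzero polynomial P over k in the 30 variables Y_{t,α}, where 1 ≤ t ≤ 5 and α runs over the six exponent vectors of degree-2 monomials in x,y,z, with the following property: for every 5-tuple (f_1,…,f_5) of homogeneous polynomials of degree 2 in R such that P does not vanish at the point whose (t,α)-coordinate is the coefficient of x^α in f_t, the ideal I = (f_1,…,f_5) satisfies 𝔪^3 ⊆ I, dim_k I_2 = 5, and dim_k Soc(R/I) = 1. (That is, an ideal generated by 5 general quadrics in k[x,y,z] is an 𝔪-primary Gorenstein ideal of codimension 3 minimally generated by 5 quadrics.) -/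

import Mathlib

open MvPolynomial

/-- The maximal graded ideal `𝔪 = (x, y, z)` of `k[x,y,z]`. -/
noncomputable def mIdeal (k : Type*) [Field k] : Ideal (MvPolynomial (Fin 3) k) :=
  Ideal.span (Set.range (X : Fin 3 → MvPolynomial (Fin 3) k))

/-- `dim_k Soc(R/I)`, the total dimension of the socle `(I : 𝔪)/I` of `R/I`,
realized as the image of the colon ideal `(I : 𝔪)` in `R/I`. -/
noncomputable def socDim {k : Type*} [Field k] (I : Ideal (MvPolynomial (Fin 3) k)) : ℕ :=
  Module.finrank k
    ↥(Submodule.map (Ideal.Quotient.mkₐ k I).toLinearMap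
      ((Submodule.colon I (mIdeal k)).restrictScalars k))

/-!
Let `c` be the coefficient point of `f`. The ten products `x_b f_t` chosen by `cubicFactor`
span `R₃` as soon as the `10 × 10` matrix of their cubic coefficients is invertible; then
`𝔪³ ⊆ I`. The `(i, j)` entry of the `3 × 3` matrix `socleMatrix c` is the determinant of the
coefficient rows of `x_i x_j, f_1, …, f_5` on the six quadratic monomials. The determinant is
linear in the first row, so `a ᵥ* socleMatrix c = 0` whenever `ℓ = ∑ aᵢ xᵢ` has all `ℓ x_j` in
the span of the `f_t`. Hence if `socleMatrix c` is invertible, no linear form lies in the socle,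
and the `f_t` are linearly independent, so `dim I₂ = 5`. Since `I` is generated in degree 2 and
contains `𝔪³`, the socle is then the image of `R₂` in `R/I`, of dimension `6 - 5 = 1`.
`P` is the product of the two determinants, with the coefficients as variables; it is nonzero
because it takes the value `-1` at `xy, xz, y², z², x² - yz`.
-/

namespace MvPolynomial

section CommSemiring

variable {σ R : Type*} [CommSemiring R]

theorem homogeneousComponent_add_mul_of_isHomogeneous {f : MvPolynomial σ R} {n : ℕ}
    (hf : f.IsHomogeneous n) (m : ℕ) (g : MvPolynomial σ R) :
    homogeneousComponent (m + n) (g * f) = homogeneousComponent m g * f := by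
  classical
  ext μ
  rw [coeff_homogeneousComponent, coeff_mul, coeff_mul, Finset.ite_sum_zero]
  refine Finset.sum_congr rfl fun ab hab => ?_
  by_cases hb : coeff ab.2 f = 0
  · simp [hb]
  have hb' : ab.2.degree = n := by_contra fun h => hb (hf.coeff_eq_zero h)
  have hdeg : ab.1.degree + n = μ.degree := by
    rw [← Finset.HasAntidiagonal.mem_antidiagonal.mp hab, map_add, hb']
  rw [coeff_homogeneousComponent]
  split_ifs <;> first | rfl | omega | simp

theorem IsHomogeneous.eq_sum_antidiagonalTuple {m n : ℕ} {f : MvPolynomial (Fin m) R}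
    (hf : f.IsHomogeneous n) :
    f = ∑ a ∈ Finset.Nat.antidiagonalTuple m n,
      monomial (Finsupp.equivFunOnFinite.symm a) (coeff (Finsupp.equivFunOnFinite.symm a) f) := by
  classical
  refine Eq.trans ?_ (Finset.sum_map _ Finsupp.equivFunOnFinite.symm.toEmbedding
    fun d => monomial d (coeff d f))
  conv_lhs => rw [← support_sum_monomial_coeff f]
  refine Finset.sum_subset (fun d hd => ?_) (fun d _ hd => by simp [notMem_support_iff.mp hd])
  refine Finset.mem_map.mpr ⟨d, ?_, by simp⟩
  rw [Finset.Nat.mem_antidiagonalTuple, ← Finsupp.degree_eq_sum]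
  exact (hf.degree_eq_sum_deg_support hd).symm

theorem IsHomogeneous.mem_pow_idealOfVars {f : MvPolynomial σ R} {n : ℕ}
    (hf : f.IsHomogeneous n) : f ∈ idealOfVars σ R ^ n :=
  (mem_pow_idealOfVars_iff n f).mpr fun _ hd => (hf.degree_eq_sum_deg_support hd).le

theorem homogeneousComponent_mem_span_of_mem_ideal_span {ι : Type*}
    {f : ι → MvPolynomial σ R} {n : ℕ} (hf : ∀ i, (f i).IsHomogeneous n)
    {p : MvPolynomial σ R} (hp : p ∈ Ideal.span (Set.range f)) :
    homogeneousComponent n p ∈ Submodule.span R (Set.range f) := by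
  obtain ⟨c, rfl⟩ := Finsupp.mem_ideal_span_range_iff_exists_finsupp.mp hp
  rw [Finsupp.sum, map_sum]
  refine Submodule.sum_mem _ fun i _ => ?_
  have h := homogeneousComponent_add_mul_of_isHomogeneous (hf i) 0 (c i)
  rw [zero_add, homogeneousComponent_zero, ← smul_eq_C_mul] at h
  rw [h]
  exact Submodule.smul_mem _ _ (Submodule.subset_span ⟨i, rfl⟩)

theorem ideal_span_le_pow_idealOfVars {ι : Type*} {f : ι → MvPolynomial σ R} {n : ℕ}
    (hf : ∀ i, (f i).IsHomogeneous n) : Ideal.span (Set.range f) ≤ idealOfVars σ R ^ n :=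
  Ideal.span_le.mpr (Set.range_subset_iff.mpr fun i => (hf i).mem_pow_idealOfVars)

theorem ideal_span_inf_homogeneousSubmodule {ι : Type*} {f : ι → MvPolynomial σ R} {n : ℕ}
    (hf : ∀ i, (f i).IsHomogeneous n) :
    (Ideal.span (Set.range f)).restrictScalars R ⊓ homogeneousSubmodule σ R n =
      Submodule.span R (Set.range f) := by
  apply le_antisymm
  · rintro p ⟨hpI, hp⟩
    rw [← homogeneousComponent_eq_self hp]
    exact homogeneousComponent_mem_span_of_mem_ideal_span hf hpI
  · rw [Submodule.span_le]
    rintro _ ⟨i, rfl⟩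
    exact ⟨Ideal.subset_span ⟨i, rfl⟩, hf i⟩

end CommSemiring

theorem finrank_homogeneousSubmodule {σ R : Type*} [CommRing R] [Nontrivial R] [Fintype σ]
    (n : ℕ) : Module.finrank R (homogeneousSubmodule σ R n) = (Fintype.card σ).multichoose n := by
  classical
  rw [homogeneousSubmodule_eq_finsupp_supported]
  change Module.finrank R (restrictSupport R _) = _
  rw [Module.finrank_eq_nat_card_basis (basisRestrictSupport R _), ← Finset.card_univ,
    ← Finset.card_finsuppAntidiag_nat_eq_multichoose, ← Nat.card_eq_finsetCard]
  congr 2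
  ext d
  simp [Finset.mem_finsuppAntidiag, Finsupp.degree_eq_sum]

section Socle

attribute [local instance] MvPolynomial.gradedAlgebra

variable {σ R : Type*} [CommRing R]

theorem isHomogeneous_ideal_span {ι : Type*} {f : ι → MvPolynomial σ R} {n : ℕ}
    (hf : ∀ i, (f i).IsHomogeneous n) :
    (Ideal.span (Set.range f)).IsHomogeneous (homogeneousSubmodule σ R) :=
  Ideal.homogeneous_span _ _ fun _ ⟨i, hi⟩ => hi ▸ ⟨n, hf i⟩

theorem map_colon_idealOfVars_eq_map_homogeneousSubmodule_two [Nonempty σ]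
    {I : Ideal (MvPolynomial σ R)} (hI : I.IsHomogeneous (homogeneousSubmodule σ R))
    (hI2 : I ≤ idealOfVars σ R ^ 2) (hI3 : idealOfVars σ R ^ 3 ≤ I)
    (hlin : ∀ ℓ : MvPolynomial σ R, ℓ.IsHomogeneous 1 → (∀ j, ℓ * X j ∈ I) → ℓ = 0) :
    ((I.colon (idealOfVars σ R)).restrictScalars R).map (Ideal.Quotient.mkₐ R I).toLinearMap =
      (homogeneousSubmodule σ R 2).map (Ideal.Quotient.mkₐ R I).toLinearMap := by
  apply le_antisymm
  · rintro _ ⟨h, hh, rfl⟩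
    have hX : ∀ j, h * X j ∈ I := fun j => by
      simpa using Submodule.mem_colon.mp hh (X j) (Ideal.subset_span ⟨j, rfl⟩)
    have h0 : homogeneousComponent 0 h = 0 := by
      obtain ⟨j⟩ := ‹Nonempty σ›
      have := (mem_pow_idealOfVars_iff' 2 _).mp (hI2 (hX j)) (Finsupp.single j 1) (by simp)
      rw [← zero_add (Finsupp.single j 1), coeff_mul_X] at this
      rw [homogeneousComponent_zero, this, C_0]
    have h1 : homogeneousComponent 1 h = 0 := by
      refine hlin _ (homogeneousComponent_isHomogeneous 1 h) fun j => ?_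
      rw [← homogeneousComponent_add_mul_of_isHomogeneous (isHomogeneous_X R j)]
      exact homogeneousComponent_mem_of_mem hI (hX j) _
    have htail : h - homogeneousComponent 0 h - homogeneousComponent 1 h -
        homogeneousComponent 2 h ∈ idealOfVars σ R ^ 3 := by
      refine (mem_pow_idealOfVars_iff' 3 _).mpr fun d hd => ?_
      simp only [coeff_sub, coeff_homogeneousComponent]
      interval_cases d.degree <;> simp
    refine ⟨homogeneousComponent 2 h, homogeneousComponent_isHomogeneous 2 h, ?_⟩
    rw [h0, h1, sub_zero, sub_zero] at htail
    exact (by simpa [Ideal.Quotient.mk_eq_mk_iff_sub_mem] using hI3 htail : _ = _).symm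
  · refine Submodule.map_mono fun p hp => Submodule.mem_colon.mpr fun x hx => hI3 ?_
    rw [pow_succ, smul_eq_mul]
    exact Ideal.mul_mem_mul (IsHomogeneous.mem_pow_idealOfVars hp) hx

end Socle

end MvPolynomial

theorem Submodule.finrank_map_add_finrank_inf_ker {K V W : Type*} [DivisionRing K]
    [AddCommGroup V] [Module K V] [AddCommGroup W] [Module K W] (f : V →ₗ[K] W)
    (U : Submodule K V) [FiniteDimensional K U] :
    Module.finrank K (U.map f) + Module.finrank K ↥(U ⊓ LinearMap.ker f) = Module.finrank K U := by
  rw [← LinearMap.range_domRestrict, ← Submodule.map_comap_subtype,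
    Submodule.finrank_map_subtype_eq, ← LinearMap.ker_domRestrict]
  exact LinearMap.finrank_range_add_finrank_ker _

namespace Matrix

variable {R : Type*} [CommRing R] {n : ℕ}

noncomputable def detCons (rows : Fin n → Fin (n + 1) → R) : (Fin (n + 1) → R) →ₗ[R] R :=
  detRowAlternating.toMultilinearMap.toLinearMap (Fin.cons 0 rows) 0

theorem detCons_apply (rows : Fin n → Fin (n + 1) → R) (v : Fin (n + 1) → R) :
    detCons rows v = (of (Fin.cons v rows)).det := by
  rw [detCons, MultilinearMap.toLinearMap_apply, Fin.update_cons_zero]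
  rfl

variable {K : Type*} [Field K] {rows : Fin n → Fin (n + 1) → K} {v : Fin (n + 1) → K}

theorem det_of_cons_eq_zero_of_mem_span (hv : v ∈ Submodule.span K (Set.range rows)) :
    (of (Fin.cons v rows)).det = 0 :=
  by_contra fun h => (linearIndependent_finCons.mp (linearIndependent_rows_of_det_ne_zero h)).2 hv

theorem linearIndependent_of_det_of_cons_ne_zero (h : (of (Fin.cons v rows)).det ≠ 0) :
    LinearIndependent K rows :=
  (linearIndependent_finCons.mp (linearIndependent_rows_of_det_ne_zero h)).1

end Matrix

namespace FiveQuadrics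

open Matrix

abbrev QuadExp : Type := ↥(Finset.Nat.antidiagonalTuple 3 2)
abbrev CoeffIndex : Type := Fin 5 × QuadExp

def quadExp (l : Fin 6) : QuadExp :=
  ⟨![![2, 0, 0], ![1, 1, 0], ![1, 0, 1], ![0, 2, 0], ![0, 1, 1], ![0, 0, 2]] l, by
    fin_cases l <;> decide⟩

def cubicExp : Fin 10 → Fin 3 → ℕ :=
  ![![3, 0, 0], ![2, 1, 0], ![2, 0, 1], ![1, 2, 0], ![1, 1, 1], ![1, 0, 2], ![0, 3, 0],
    ![0, 2, 1], ![0, 1, 2], ![0, 0, 3]]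

-- Ordered so that `cubicMatrix witness` is upper unitriangular.
def cubicFactor : Fin 10 → Fin 3 × Fin 5 :=
  ![(0, 4), (0, 0), (0, 1), (1, 0), (2, 0), (2, 1), (1, 2), (2, 2), (1, 3), (2, 3)]

section Generic

variable {S S' : Type*} [CommRing S] [CommRing S']

def cubicMatrix (c : CoeffIndex → S) : Matrix (Fin 10) (Fin 10) S :=
  of fun i j => ∑ a : QuadExp,
    if (a : Fin 3 → ℕ) + Pi.single (cubicFactor i).1 1 = cubicExp j then c ((cubicFactor i).2, a)
    else 0

def quadRows (c : CoeffIndex → S) : Fin 5 → Fin 6 → S := fun t l => c (t, quadExp l)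

def monomialRow (i j : Fin 3) : Fin 6 → S := fun l =>
  if (quadExp l : Fin 3 → ℕ) = Pi.single i 1 + Pi.single j 1 then 1 else 0

noncomputable def socleMatrix (c : CoeffIndex → S) : Matrix (Fin 3) (Fin 3) S :=
  of fun i j => detCons (quadRows c) (monomialRow i j)

noncomputable def detProduct (c : CoeffIndex → S) : S := (cubicMatrix c).det * (socleMatrix c).det

variable (φ : S →+* S')

theorem cubicMatrix_map (c : CoeffIndex → S) : cubicMatrix (φ ∘ c) = (cubicMatrix c).map φ := by
  ext; simp [cubicMatrix, map_sum, apply_ite φ]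

theorem socleMatrix_map (c : CoeffIndex → S) : socleMatrix (φ ∘ c) = (socleMatrix c).map φ := by
  ext i j
  simp only [socleMatrix, map_apply, of_apply, detCons_apply, RingHom.map_det]
  congr 1
  ext r l
  refine Fin.cases ?_ (fun t => ?_) r <;> simp [monomialRow, quadRows, apply_ite φ]

theorem detProduct_map (c : CoeffIndex → S) : detProduct (φ ∘ c) = φ (detProduct c) := by
  simp [detProduct, cubicMatrix_map, socleMatrix_map, RingHom.map_det]

end Generic

-- The coefficients of `xy, xz, y², z², x² - yz`.
def witness : CoeffIndex → ℤ := fun p =>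
  (if (p.2 : Fin 3 → ℕ) = ![![1, 1, 0], ![1, 0, 1], ![0, 2, 0], ![0, 0, 2], ![2, 0, 0]] p.1
    then 1 else 0) - (if p.1 = 4 ∧ (p.2 : Fin 3 → ℕ) = ![0, 1, 1] then 1 else 0)

theorem det_cubicMatrix_witness : (cubicMatrix witness).det = 1 := by
  rw [det_of_isUpperTriangular]
  · decide
  · intro i j hij
    simp only [cubicMatrix, of_apply]
    revert i j
    decide

theorem quadRows_witness : quadRows witness =
    ![![0, 1, 0, 0, 0, 0], ![0, 0, 1, 0, 0, 0], ![0, 0, 0, 1, 0, 0], ![0, 0, 0, 0, 0, 1],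
      ![1, 0, 0, 0, -1, 0]] := by
  decide

theorem detCons_quadRows_witness (v : Fin 6 → ℤ) :
    detCons (quadRows witness) v = v 0 + v 4 := by
  rw [detCons_apply, quadRows_witness]
  simp [det_succ_row_zero, Fin.sum_univ_succ, Fin.succAbove]

theorem det_socleMatrix_witness : (socleMatrix witness).det = -1 := by
  simp only [det_fin_three, socleMatrix, of_apply, detCons_quadRows_witness]
  decide

theorem detProduct_witness : detProduct witness = -1 := by
  rw [detProduct, det_cubicMatrix_witness, det_socleMatrix_witness, one_mul]

noncomputable def genericityPoly (k : Type*) [Field k] : MvPolynomial CoeffIndex k :=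
  detProduct X

variable {k : Type*} [Field k]

theorem eval_genericityPoly (c : CoeffIndex → k) : eval c (genericityPoly k) = detProduct c := by
  rw [genericityPoly, ← RingHom.coe_coe, ← detProduct_map]
  congr
  funext v
  simp

variable (k) in
theorem genericityPoly_ne_zero : genericityPoly k ≠ 0 := by
  intro h
  have := eval_genericityPoly (Int.castRingHom k ∘ witness)
  rw [detProduct_map, detProduct_witness, h, map_zero] at this
  simp at this

noncomputable def coeffPoint (f : Fin 5 → MvPolynomial (Fin 3) k) : CoeffIndex → k :=
  fun p => coeff (Finsupp.equivFunOnFinite.symm (p.2 : Fin 3 → ℕ)) (f p.1)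

section CubicMatrix

variable {f : Fin 5 → MvPolynomial (Fin 3) k}

theorem coeff_X_mul_of_isHomogeneous_two {p : MvPolynomial (Fin 3) k} (hp : p.IsHomogeneous 2)
    (b : Fin 3) (v : Fin 3 → ℕ) :
    coeff (Finsupp.equivFunOnFinite.symm v) (X b * p) = ∑ a : QuadExp,
      if (a : Fin 3 → ℕ) + Pi.single b 1 = v then coeff (Finsupp.equivFunOnFinite.symm a) p
      else 0 := by
  classical
  conv_lhs => rw [hp.eq_sum_antidiagonalTuple]
  rw [Finset.mul_sum, coeff_sum, ← Finset.sum_coe_sort]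
  refine Finset.sum_congr rfl fun a _ => ?_
  have hexp : Finsupp.single b 1 + Finsupp.equivFunOnFinite.symm a =
      Finsupp.equivFunOnFinite.symm ((a : Fin 3 → ℕ) + Pi.single b 1) := by
    ext i
    simp [Finsupp.single_apply, Pi.single_apply, add_comm, eq_comm]
  rw [X, monomial_mul, one_mul, coeff_monomial, hexp]
  exact if_congr Finsupp.equivFunOnFinite.symm.injective.eq_iff rfl rfl

theorem cubicMatrix_coeffPoint (hf : ∀ t, (f t).IsHomogeneous 2) (i j : Fin 10) :
    cubicMatrix (coeffPoint f) i j = coeff (Finsupp.equivFunOnFinite.symm (cubicExp j))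
      (X (cubicFactor i).1 * f (cubicFactor i).2) := by
  rw [coeff_X_mul_of_isHomogeneous_two (hf _)]
  rfl

theorem exists_cubicExp_eq {μ : Fin 3 →₀ ℕ} (hμ : μ.degree = 3) :
    ∃ j, Finsupp.equivFunOnFinite.symm (cubicExp j) = μ := by
  have hcover : ∀ v ∈ Finset.Nat.antidiagonalTuple 3 3, ∃ j, cubicExp j = v := by decide
  obtain ⟨j, hj⟩ := hcover μ (by rwa [Finset.Nat.mem_antidiagonalTuple, ← Finsupp.degree_eq_sum])
  exact ⟨j, by simp [hj]⟩

theorem isHomogeneous_three_mem_ideal_span (hf : ∀ t, (f t).IsHomogeneous 2)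
    (hdet : (cubicMatrix (coeffPoint f)).det ≠ 0) {p : MvPolynomial (Fin 3) k}
    (hp : p.IsHomogeneous 3) : p ∈ Ideal.span (Set.range f) := by
  obtain ⟨b, hb⟩ := vecMul_surjective_iff_isUnit.mpr ((isUnit_iff_isUnit_det _).mpr hdet.isUnit)
    fun j => coeff (Finsupp.equivFunOnFinite.symm (cubicExp j)) p
  set q := ∑ i, b i • (X (cubicFactor i).1 * f (cubicFactor i).2)
  have hq : q.IsHomogeneous 3 := Submodule.sum_mem (homogeneousSubmodule _ k 3) fun i _ =>
    Submodule.smul_mem _ (b i) ((isHomogeneous_X k _).mul (hf _))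
  have hpq : p = q := by
    ext μ
    by_cases hμ : μ.degree = 3
    · obtain ⟨j, rfl⟩ := exists_cubicExp_eq hμ
      rw [← congrFun hb j]
      simp [q, vecMul, dotProduct, cubicMatrix_coeffPoint hf, coeff_sum, mul_comm]
    · rw [hp.coeff_eq_zero hμ, hq.coeff_eq_zero hμ]
  rw [hpq]
  exact Ideal.sum_mem _ fun i _ => Submodule.smul_of_tower_mem _ _
    (Ideal.mul_mem_left _ _ (Ideal.subset_span ⟨_, rfl⟩))

theorem pow_idealOfVars_three_le (hf : ∀ t, (f t).IsHomogeneous 2)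
    (hdet : (cubicMatrix (coeffPoint f)).det ≠ 0) :
    idealOfVars (Fin 3) k ^ 3 ≤ Ideal.span (Set.range f) := by
  rw [pow_idealOfVars_eq_span, Ideal.span_le]
  rintro _ ⟨μ, hμ, rfl⟩
  exact isHomogeneous_three_mem_ideal_span hf hdet (isHomogeneous_monomial _ hμ)

end CubicMatrix

section SocleMatrix

variable {f : Fin 5 → MvPolynomial (Fin 3) k}

noncomputable def quadCoeffs : MvPolynomial (Fin 3) k →ₗ[k] Fin 6 → k :=
  LinearMap.pi fun l => lcoeff k (Finsupp.equivFunOnFinite.symm (quadExp l : Fin 3 → ℕ))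

theorem monomialRow_eq_quadCoeffs (i j : Fin 3) :
    monomialRow i j = quadCoeffs (X i * X j : MvPolynomial (Fin 3) k) := by
  classical
  funext l
  have hexp : Finsupp.single i 1 + Finsupp.single j 1 =
      Finsupp.equivFunOnFinite.symm (Pi.single i 1 + Pi.single j 1 : Fin 3 → ℕ) := by
    ext m
    simp [Finsupp.single_apply, Pi.single_apply, eq_comm]
  simp only [monomialRow, quadCoeffs, LinearMap.pi_apply, lcoeff_apply, X, monomial_mul, one_mul,
    coeff_monomial, hexp]
  exact if_congr (by rw [Finsupp.equivFunOnFinite.symm.injective.eq_iff, eq_comm]) rfl rfl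

theorem quadRows_coeffPoint : quadRows (coeffPoint f) = quadCoeffs ∘ f :=
  rfl

theorem linearIndependent_of_det_socleMatrix_ne_zero
    (hdet : (socleMatrix (coeffPoint f)).det ≠ 0) : LinearIndependent k f := by
  obtain ⟨i, j, hij⟩ : ∃ i j, socleMatrix (coeffPoint f) i j ≠ 0 := by
    by_contra! h
    exact hdet (by rw [show socleMatrix (coeffPoint f) = 0 from ext h, det_zero])
  rw [socleMatrix, of_apply, quadRows_coeffPoint, detCons_apply] at hij
  exact LinearIndependent.of_comp quadCoeffs (linearIndependent_of_det_of_cons_ne_zero hij)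

theorem eq_zero_of_mul_X_mem_ideal_span (hf : ∀ t, (f t).IsHomogeneous 2)
    (hdet : (socleMatrix (coeffPoint f)).det ≠ 0) {ℓ : MvPolynomial (Fin 3) k}
    (hℓ : ℓ.IsHomogeneous 1) (hmul : ∀ j, ℓ * X j ∈ Ideal.span (Set.range f)) : ℓ = 0 := by
  have hℓ' : ℓ ∈ Submodule.span k (Set.range X) := by
    rw [← homogeneousSubmodule_one_eq_span_X]
    exact hℓ
  obtain ⟨a, rfl⟩ := (Submodule.mem_span_range_iff_exists_fun k).mp hℓ'
  suffices a = 0 by simp [this]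
  refine eq_zero_of_vecMul_eq_zero hdet (funext fun j => ?_)
  have hspan : quadCoeffs ((∑ i, a i • X i) * X j) ∈
      Submodule.span k (Set.range (quadRows (coeffPoint f))) := by
    rw [quadRows_coeffPoint, Set.range_comp, ← Submodule.map_span]
    refine Submodule.mem_map_of_mem ?_
    rw [← homogeneousComponent_eq_self (hℓ.mul (isHomogeneous_X k j))]
    exact homogeneousComponent_mem_span_of_mem_ideal_span hf (hmul j)
  have h0 : detCons (quadRows (coeffPoint f)) (quadCoeffs ((∑ i, a i • X i) * X j)) = 0 := by
    rw [detCons_apply]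
    exact det_of_cons_eq_zero_of_mem_span hspan
  calc (a ᵥ* socleMatrix (coeffPoint f)) j
      = detCons (quadRows (coeffPoint f)) (quadCoeffs ((∑ i, a i • X i) * X j)) := by
        simp [vecMul, dotProduct, socleMatrix, Finset.sum_mul, monomialRow_eq_quadCoeffs]
    _ = 0 := h0

end SocleMatrix

end FiveQuadrics

section Socle

attribute [local instance] MvPolynomial.gradedAlgebra

variable {k : Type*} [Field k]

theorem socDim_add_finrank_inf_homogeneousSubmodule_two {I : Ideal (MvPolynomial (Fin 3) k)}
    (hI : I.IsHomogeneous (homogeneousSubmodule (Fin 3) k)) (hI2 : I ≤ mIdeal k ^ 2)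
    (hI3 : mIdeal k ^ 3 ≤ I)
    (hlin : ∀ ℓ : MvPolynomial (Fin 3) k, ℓ.IsHomogeneous 1 → (∀ j, ℓ * X j ∈ I) → ℓ = 0) :
    socDim I + Module.finrank k ↥(I.restrictScalars k ⊓ homogeneousSubmodule (Fin 3) k 2) =
      6 := by
  have : FiniteDimensional k (homogeneousSubmodule (Fin 3) k 2) :=
    Module.Finite.iff_fg.mpr (homogeneousSubmodule_fg _ _ 2)
  have hker : LinearMap.ker (Ideal.Quotient.mkₐ k I).toLinearMap = I.restrictScalars k := by
    ext
    simp [Ideal.Quotient.eq_zero_iff_mem]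
  have h := Submodule.finrank_map_add_finrank_inf_ker (Ideal.Quotient.mkₐ k I).toLinearMap
    (homogeneousSubmodule (Fin 3) k 2)
  rw [hker, inf_comm, finrank_homogeneousSubmodule,
    ← map_colon_idealOfVars_eq_map_homogeneousSubmodule_two hI hI2 hI3 hlin] at h
  exact h.trans (by simp [Nat.multichoose_eq, Nat.choose_two_right])

end Socle

open FiveQuadrics in
/-- There is a nonzero polynomial `P` in the 30 variables `Y_{t,α}` (`1 ≤ t ≤ 5`, `α` a
degree-2 exponent vector in three variables) such that whenever `P` does not vanish at the
coefficient point of a 5-tuple of quadrics `f_1,…,f_5 ∈ k[x,y,z]`, the ideal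
`I = (f_1,…,f_5)` satisfies `𝔪³ ⊆ I`, `dim_k I_2 = 5` and `dim_k Soc(R/I) = 1`:
five general quadrics generate an `𝔪`-primary Gorenstein ideal of codimension 3 minimally
generated by 5 quadrics. -/
theorem stmt5 (k : Type*) [Field k] :
    ∃ P : MvPolynomial (Fin 5 × ↥(Finset.Nat.antidiagonalTuple 3 2)) k, P ≠ 0 ∧
      ∀ f : Fin 5 → MvPolynomial (Fin 3) k, (∀ t, (f t).IsHomogeneous 2) →
        MvPolynomial.eval
          (fun p => MvPolynomial.coeff
            (Finsupp.equivFunOnFinite.symm ((p.2 : Fin 3 → ℕ))) (f p.1)) P ≠ 0 →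
        (mIdeal k) ^ 3 ≤ Ideal.span (Set.range f)
        ∧ Module.finrank k
            ↥((Ideal.span (Set.range f)).restrictScalars k ⊓
              homogeneousSubmodule (Fin 3) k 2) = 5
        ∧ socDim (Ideal.span (Set.range f)) = 1 := by
  refine ⟨genericityPoly k, genericityPoly_ne_zero k, fun f hf hP => ?_⟩
  rw [eval_genericityPoly] at hP
  obtain ⟨hcubic, hsocle⟩ := mul_ne_zero_iff.mp hP
  have hI3 : mIdeal k ^ 3 ≤ Ideal.span (Set.range f) := pow_idealOfVars_three_le hf hcubic
  have hI2 : Module.finrank k ↥((Ideal.span (Set.range f)).restrictScalars k ⊓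
      homogeneousSubmodule (Fin 3) k 2) = 5 := by
    rw [ideal_span_inf_homogeneousSubmodule hf,
      finrank_span_eq_card (linearIndependent_of_det_socleMatrix_ne_zero hsocle), Fintype.card_fin]
  have hsoc := socDim_add_finrank_inf_homogeneousSubmodule_two (isHomogeneous_ideal_span hf)
    (ideal_span_le_pow_idealOfVars hf) hI3
    fun _ hℓ hmul => eq_zero_of_mul_X_mem_ideal_span hf hsocle hℓ hmul
  exact ⟨hI3, hI2, by omega⟩
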